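/- If Λ(x) and Λ(u) are positive definite and ‖u − x‖_x < 1, then ‖g(u) − g(x)‖*_x ≤ ‖u − x‖_x / (1 − ‖u − x‖_x). -/

import Mathlib

open Matrix

/-- The gradient of the barrier `f(x) = -log det Λ(x)`:
`g(x)_i = -tr(Λ(x)⁻¹ · Λ(e_i))` (with the total matrix inverse, `0` for singular matrices). -/
noncomputable def grad {U L : ℕ} (Lam : (Fin U → ℝ) →ₗ[ℝ] Matrix (Fin L) (Fin L) ℝ)
    (x : Fin U → ℝ) : Fin U → ℝ :=
  fun i => -((Lam x)⁻¹ * Lam (Pi.single i 1)).trace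

/-- The Hessian of the barrier: `H(x)_{ij} = tr(Λ(x)⁻¹ Λ(e_i) Λ(x)⁻¹ Λ(e_j))`. -/
noncomputable def hess {U L : ℕ} (Lam : (Fin U → ℝ) →ₗ[ℝ] Matrix (Fin L) (Fin L) ℝ)
    (x : Fin U → ℝ) : Matrix (Fin U) (Fin U) ℝ :=
  Matrix.of fun i j =>
    ((Lam x)⁻¹ * Lam (Pi.single i 1) * (Lam x)⁻¹ * Lam (Pi.single j 1)).trace

/-- The local norm `‖v‖_x = (vᵀ H(x) v)^{1/2}`. -/
noncomputable def locNorm {U L : ℕ} (Lam : (Fin U → ℝ) →ₗ[ℝ] Matrix (Fin L) (Fin L) ℝ)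
    (x v : Fin U → ℝ) : ℝ :=
  Real.sqrt (v ⬝ᵥ (hess Lam x).mulVec v)

/-- The dual local norm `‖t‖*_x = (tᵀ H(x)⁻¹ t)^{1/2}`. -/
noncomputable def dualNorm {U L : ℕ} (Lam : (Fin U → ℝ) →ₗ[ℝ] Matrix (Fin L) (Fin L) ℝ)
    (x t : Fin U → ℝ) : ℝ :=
  Real.sqrt (t ⬝ᵥ (hess Lam x)⁻¹.mulVec t)

/-!
Whiten at `x`: with `S = Λ(x)^{-1/2}`, the map `v ↦ S Λ(v) S` sends the local norm `‖·‖_x` to the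
Frobenius norm, `M := S Λ(u) S = 1 + S Λ(u - x) S`, and `⟨g(u) - g(x), v⟩ = tr((1 - M⁻¹) S Λ(v) S)`.
By Cauchy–Schwarz for the trace form, `‖g(u) - g(x)‖*_x ≤ ‖1 - M⁻¹‖_F`. Every eigenvalue `d` of `M`
satisfies `|d - 1| ≤ ‖M - 1‖_F = ‖u - x‖_x =: r < 1`, so `d ≥ 1 - r` and
`|1 - d⁻¹| = |d - 1| / d ≤ |d - 1| / (1 - r)`, whence `‖1 - M⁻¹‖_F ≤ r / (1 - r)`.
-/

theorem sq_one_sub_inv_le {d r : ℝ} (hr0 : 0 ≤ r) (hr : r < 1) (hd : (d - 1) ^ 2 ≤ r ^ 2) :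
    (1 - d⁻¹) ^ 2 ≤ (d - 1) ^ 2 / (1 - r) ^ 2 := by
  have hdr : 1 - r ≤ d := by nlinarith
  have hd0 : 0 < d := by linarith
  rw [show 1 - d⁻¹ = (d - 1) / d by field_simp, div_pow]
  gcongr

namespace Matrix

variable {m n : Type*} [Fintype m] [Fintype n]

theorem IsSymm.mul_mul_self {α : Type*} [CommSemiring α] {S X : Matrix n n α} (hS : S.IsSymm)
    (hX : X.IsSymm) : (S * X * S).IsSymm := by
  rw [IsSymm, transpose_mul, transpose_mul, hS.eq, hX.eq, mul_assoc]

theorem trace_transpose_mul_self_nonneg (A : Matrix m n ℝ) : 0 ≤ (Aᵀ * A).trace := by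
  rw [← vec_dotProduct_vec]
  exact dotProduct_self_star_nonneg _

theorem sq_trace_transpose_mul_le (A B : Matrix m n ℝ) :
    (Aᵀ * B).trace ^ 2 ≤ (Aᵀ * A).trace * (Bᵀ * B).trace := by
  simp only [← vec_dotProduct_vec, dotProduct]
  simpa only [sq] using Finset.sum_mul_sq_le_sq_mul_sq Finset.univ A.vec B.vec

theorem trace_transpose_mul_self_pos {A : Matrix m n ℝ} (hA : A ≠ 0) : 0 < (Aᵀ * A).trace :=
  (trace_transpose_mul_self_nonneg A).lt_of_ne' fun h =>
    hA (trace_conjTranspose_mul_self_eq_zero_iff.mp h)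

theorem IsSymm.trace_mul_self_nonneg {A : Matrix n n ℝ} (hA : A.IsSymm) : 0 ≤ (A * A).trace := by
  simpa only [hA.eq] using trace_transpose_mul_self_nonneg A

theorem IsSymm.sq_trace_mul_le {A B : Matrix n n ℝ} (hA : A.IsSymm) (hB : B.IsSymm) :
    (A * B).trace ^ 2 ≤ (A * A).trace * (B * B).trace := by
  simpa only [hA.eq, hB.eq] using sq_trace_transpose_mul_le A B

variable [DecidableEq n]

theorem IsHermitian.trace_cfc {A : Matrix n n ℝ} (hA : A.IsHermitian) (f : ℝ → ℝ) :
    (cfc f A).trace = ∑ i, f (hA.eigenvalues i) := by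
  rw [hA.cfc_eq, IsHermitian.cfc, Unitary.conjStarAlgAut_apply, trace_mul_cycle,
    Unitary.coe_star_mul_self, one_mul, trace_diagonal]
  rfl

theorem PosDef.trace_sq_one_sub_inv_le {M : Matrix n n ℝ} (hM : M.PosDef) {r : ℝ} (hr0 : 0 ≤ r)
    (hr : r < 1) (h : ((M - 1) * (M - 1)).trace ≤ r ^ 2) :
    ((1 - M⁻¹) * (1 - M⁻¹)).trace ≤ (r / (1 - r)) ^ 2 := by
  have hMs : IsSelfAdjoint M := hM.isHermitian
  have hc : ∀ f : ℝ → ℝ, ContinuousOn f (spectrum ℝ M) := fun f =>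
    M.finite_real_spectrum.continuousOn f
  have hsub : (M - 1) * (M - 1) = cfc (fun t : ℝ => (t - 1) ^ 2) M := by
    rw [cfc_pow _ _ M, cfc_sub _ _ M, cfc_id' ℝ M, cfc_const_one ℝ M, sq]
  have hinv : (1 - M⁻¹) * (1 - M⁻¹) = cfc (fun t : ℝ => (1 - t⁻¹) ^ 2) M := by
    rw [cfc_pow _ _ M (hc _), cfc_sub _ _ M (hc _) (hc _), cfc_const_one ℝ M,
      cfc_ringInverse_id (a := M) hM.isUnit, nonsing_inv_eq_ringInverse, sq]
  set d := hM.isHermitian.eigenvalues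
  rw [hsub, hM.isHermitian.trace_cfc] at h
  rw [hinv, hM.isHermitian.trace_cfc, div_pow]
  have hd : ∀ i, (d i - 1) ^ 2 ≤ r ^ 2 := fun i =>
    (Finset.single_le_sum (fun j _ => sq_nonneg (d j - 1)) (Finset.mem_univ i)).trans h
  calc ∑ i, (1 - (d i)⁻¹) ^ 2 ≤ ∑ i, (d i - 1) ^ 2 / (1 - r) ^ 2 :=
        Finset.sum_le_sum fun i _ => sq_one_sub_inv_le hr0 hr (hd i)
    _ ≤ r ^ 2 / (1 - r) ^ 2 := by rw [← Finset.sum_div]; gcongr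

theorem PosDef.dotProduct_inv_mulVec_le {H : Matrix n n ℝ} (hH : H.PosDef) {t : n → ℝ} {c : ℝ}
    (hc : 0 ≤ c) (h : ∀ v, (t ⬝ᵥ v) ^ 2 ≤ c * (v ⬝ᵥ H *ᵥ v)) : t ⬝ᵥ H⁻¹ *ᵥ t ≤ c := by
  set w := H⁻¹ *ᵥ t
  have hHw : H *ᵥ w = t := by
    rw [mulVec_mulVec, mul_nonsing_inv _ ((isUnit_iff_isUnit_det H).mp hH.isUnit), one_mulVec]
  have hD : t ⬝ᵥ w = w ⬝ᵥ H *ᵥ w := by rw [hHw, dotProduct_comm]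
  have hD0 : 0 ≤ t ⬝ᵥ w := hD ▸ hH.posSemidef.dotProduct_mulVec_nonneg w
  have hw := h w
  rw [← hD] at hw
  nlinarith

theorem PosDef.exists_isSymm_mul_self_eq_inv {A : Matrix n n ℝ} (hA : A.PosDef) :
    ∃ S : Matrix n n ℝ, S.IsSymm ∧ IsUnit S ∧ S * S = A⁻¹ ∧ S * A * S = 1 := by
  open scoped MatrixOrder in
  obtain ⟨S, hS, hSS⟩ : ∃ S : Matrix n n ℝ, IsSelfAdjoint S ∧ S * S = A⁻¹ :=
    ⟨CFC.sqrt A⁻¹, (CFC.sqrt_nonneg A⁻¹).isSelfAdjoint,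
      CFC.sqrt_mul_sqrt_self A⁻¹ hA.inv.posSemidef.nonneg⟩
  have hSAS : S * A * S = 1 := by
    refine mul_eq_one_comm.mp ?_
    rw [← mul_assoc, hSS, nonsing_inv_mul _ ((isUnit_iff_isUnit_det A).mp hA.isUnit)]
  exact ⟨S, hS, IsUnit.of_mul_eq_one (A * S) (by rw [← mul_assoc, hSAS]), hSS, hSAS⟩

theorem PosDef.mul_mul_self_of_isSymm {A S : Matrix n n ℝ} (hA : A.PosDef) (hS : S.IsSymm)
    (hSu : IsUnit S) : (S * A * S).PosDef := by
  have hconj := hSu.posDef_star_left_conjugate_iff.mpr hA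
  rwa [star_eq_conjTranspose, conjTranspose_eq_transpose_of_trivial, hS.eq] at hconj

end Matrix

theorem LinearMap.apply_eq_sum_smul_single {ι R M : Type*} [Fintype ι] [DecidableEq ι] [Semiring R]
    [AddCommMonoid M] [Module R M] (f : (ι → R) →ₗ[R] M) (v : ι → R) :
    f v = ∑ i, v i • f (Pi.single i 1) := by
  conv_lhs => rw [← Finset.univ_sum_single v]
  simp only [map_sum, ← map_smul, ← Pi.single_smul', smul_eq_mul, mul_one]

section Barrier

variable {U L : ℕ} (Lam : (Fin U → ℝ) →ₗ[ℝ] Matrix (Fin L) (Fin L) ℝ)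


theorem dotProduct_hess_mulVec (x v w : Fin U → ℝ) :
    v ⬝ᵥ hess Lam x *ᵥ w = ((Lam x)⁻¹ * Lam v * (Lam x)⁻¹ * Lam w).trace := by
  conv_rhs => rw [Lam.apply_eq_sum_smul_single v, Lam.apply_eq_sum_smul_single w]
  simp only [Matrix.sum_mul, Matrix.mul_smul, Matrix.smul_mul, Matrix.trace_sum,
    Matrix.trace_smul, smul_eq_mul, dotProduct, mulVec, hess, Finset.mul_sum, Matrix.of_apply]
  rw [Finset.sum_comm]
  refine Finset.sum_congr rfl fun i _ => Finset.sum_congr rfl fun j _ => ?_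
  ring

theorem sub_grad_dotProduct (x u v : Fin U → ℝ) :
    (grad Lam u - grad Lam x) ⬝ᵥ v = (((Lam x)⁻¹ - (Lam u)⁻¹) * Lam v).trace := by
  conv_rhs => rw [Lam.apply_eq_sum_smul_single v]
  simp only [Matrix.mul_sum, Matrix.trace_sum, Matrix.mul_smul, Matrix.trace_smul,
    Matrix.sub_mul, Matrix.trace_sub, dotProduct, grad, Pi.sub_apply, smul_eq_mul]
  refine Finset.sum_congr rfl fun i _ => ?_
  ring

variable {Lam} {x : Fin U → ℝ} {S : Matrix (Fin L) (Fin L) ℝ}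

theorem dotProduct_hess_mulVec_eq_trace_conj (hS : S * S = (Lam x)⁻¹) (v w : Fin U → ℝ) :
    v ⬝ᵥ hess Lam x *ᵥ w = (S * Lam v * S * (S * Lam w * S)).trace := by
  rw [dotProduct_hess_mulVec, ← hS]
  simp only [mul_assoc]
  rw [trace_mul_comm S]
  simp only [mul_assoc]

theorem sub_grad_dotProduct_eq_trace_conj (hS : S * S = (Lam x)⁻¹) (hSA : S * Lam x * S = 1)
    (u v : Fin U → ℝ) :
    (grad Lam u - grad Lam x) ⬝ᵥ v = ((1 - (S * Lam u * S)⁻¹) * (S * Lam v * S)).trace := by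
  have hSu : IsUnit S.det := isUnit_det_of_right_inverse (B := Lam x * S) (by rw [← mul_assoc, hSA])
  have hinv : S * (S * Lam u * S)⁻¹ * S = (Lam u)⁻¹ := by
    rw [Matrix.mul_inv_rev, Matrix.mul_inv_rev, ← mul_assoc, ← mul_assoc, mul_nonsing_inv S hSu,
      one_mul, mul_assoc, nonsing_inv_mul S hSu, mul_one]
  have hdiff : (Lam x)⁻¹ - (Lam u)⁻¹ = S * (1 - (S * Lam u * S)⁻¹) * S := by
    rw [mul_sub, sub_mul, mul_one, hS, hinv]
  rw [sub_grad_dotProduct, hdiff]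
  simp only [mul_assoc]
  rw [trace_mul_comm S]
  simp only [mul_assoc]

theorem conj_sub_one (hSA : S * Lam x * S = 1) (u : Fin U → ℝ) :
    S * Lam u * S - 1 = S * Lam (u - x) * S := by
  rw [map_sub, mul_sub, sub_mul, hSA]

theorem hess_posDef (hinj : Function.Injective Lam) (hsym : ∀ v, (Lam v).IsSymm)
    (hx : (Lam x).PosDef) : (hess Lam x).PosDef := by
  obtain ⟨S, hSsymm, hSu, hS, -⟩ := hx.exists_isSymm_mul_self_eq_inv
  have hsymm : (hess Lam x).IsSymm := IsSymm.ext fun i j => Eq.symm <| by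
    simpa only [single_dotProduct, mulVec_single, one_mul, mul_one, MulOpposite.op_one,
      one_smul, col_apply] using
      (dotProduct_hess_mulVec_eq_trace_conj hS (Pi.single i 1) (Pi.single j 1)).trans
        ((trace_mul_comm _ _).trans (dotProduct_hess_mulVec_eq_trace_conj hS _ _).symm)
  refine posDef_iff_dotProduct_mulVec.mpr ⟨hsymm, fun v hv => ?_⟩
  have hconj : S * Lam v * S ≠ 0 := by
    rw [Ne, hSu.mul_left_eq_zero, hSu.mul_right_eq_zero, ← map_zero Lam, hinj.eq_iff]
    exact hv
  have hpos := trace_transpose_mul_self_pos hconj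
  rwa [(hSsymm.mul_mul_self (hsym v)).eq, ← dotProduct_hess_mulVec_eq_trace_conj hS] at hpos

theorem locNorm_sq (hinj : Function.Injective Lam) (hsym : ∀ v, (Lam v).IsSymm)
    (hx : (Lam x).PosDef) (v : Fin U → ℝ) : locNorm Lam x v ^ 2 = v ⬝ᵥ hess Lam x *ᵥ v := by
  have hv := (hess_posDef hinj hsym hx).posSemidef.dotProduct_mulVec_nonneg v
  rw [star_trivial] at hv
  exact Real.sq_sqrt hv

end Barrier

theorem stmt5_general {U L : ℕ}
    (Lam : (Fin U → ℝ) →ₗ[ℝ] Matrix (Fin L) (Fin L) ℝ)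
    (hinj : Function.Injective Lam) (hsym : ∀ v, (Lam v).IsSymm)
    (x u : Fin U → ℝ) (hx : (Lam x).PosDef) (hu : (Lam u).PosDef)
    (h : locNorm Lam x (u - x) < 1) :
    dualNorm Lam x (grad Lam u - grad Lam x)
      ≤ locNorm Lam x (u - x) / (1 - locNorm Lam x (u - x)) := by
  obtain ⟨S, hSsymm, hSu, hS, hSA⟩ := hx.exists_isSymm_mul_self_eq_inv
  set r := locNorm Lam x (u - x)
  set M := S * Lam u * S
  have hM : M.PosDef := hu.mul_mul_self_of_isSymm hSsymm hSu
  have hr0 : 0 ≤ r := Real.sqrt_nonneg _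
  have hMr : ((M - 1) * (M - 1)).trace = r ^ 2 := by
    rw [conj_sub_one hSA, ← dotProduct_hess_mulVec_eq_trace_conj hS, locNorm_sq hinj hsym hx]
  have hP : (1 - M⁻¹).IsSymm := isSymm_one.sub hM.inv.isHermitian
  have hdual : ∀ v, ((grad Lam u - grad Lam x) ⬝ᵥ v) ^ 2
      ≤ (r / (1 - r)) ^ 2 * (v ⬝ᵥ hess Lam x *ᵥ v) := fun v => by
    have hΦ := hSsymm.mul_mul_self (hsym v)
    rw [sub_grad_dotProduct_eq_trace_conj hS hSA, dotProduct_hess_mulVec_eq_trace_conj hS]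
    calc _ ≤ ((1 - M⁻¹) * (1 - M⁻¹)).trace * (S * Lam v * S * (S * Lam v * S)).trace :=
          hP.sq_trace_mul_le hΦ
      _ ≤ _ := by
          gcongr
          · exact hΦ.trace_mul_self_nonneg
          · exact hM.trace_sq_one_sub_inv_le hr0 h hMr.le
  calc dualNorm Lam x (grad Lam u - grad Lam x) ≤ √((r / (1 - r)) ^ 2) :=
        Real.sqrt_le_sqrt ((hess_posDef hinj hsym hx).dotProduct_inv_mulVec_le (sq_nonneg _) hdual)
    _ = r / (1 - r) := Real.sqrt_sq (div_nonneg hr0 (by linarith))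

/-- `‖g(u) − g(x)‖*_x ≤ ‖u − x‖_x / (1 − ‖u − x‖_x)`. -/
theorem stmt5 {U L : ℕ} (hU : 0 < U) (hL : 0 < L)
    (Lam : (Fin U → ℝ) →ₗ[ℝ] Matrix (Fin L) (Fin L) ℝ)
    (hinj : Function.Injective Lam) (hsym : ∀ v, (Lam v).IsSymm)
    (x u : Fin U → ℝ) (hx : (Lam x).PosDef) (hu : (Lam u).PosDef)
    (h : locNorm Lam x (u - x) < 1) :
    dualNorm Lam x (grad Lam u - grad Lam x)
      ≤ locNorm Lam x (u - x) / (1 - locNorm Lam x (u - x)) :=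
  stmt5_general Lam hinj hsym x u hx hu h
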